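/- Let δ ∈ (0, 1/100), t ≥ 0, and r ∈ [0, 2]. For every q ∈ Q_G(δ, e^t) ∪ Q_G(δ, e^t)^{-1} (where Q_G(δ, e^t)^{-1} denotes the set of inverses of elements of Q_G(δ, e^t)), one has q · a_t · u_r ∈ a_t · u_r · B_G(10δ); equivalently, ‖(a_t u_r)^{-1} · q · (a_t u_r) − I‖ ≤ 10δ. -/

import Mathlib

open scoped Pointwise

/-- The L∞ operator norm (maximum absolute row sum) of a 2×2 real matrix. -/
noncomputable def rowSumNorm (g : Matrix (Fin 2) (Fin 2) ℝ) : ℝ :=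
  max (|g 0 0| + |g 0 1|) (|g 1 0| + |g 1 1|)

/-- The lower unipotent `ū_s = [[1,0],[s,1]]` as an element of SL(2,ℝ). -/
noncomputable def lowU (s : ℝ) : Matrix.SpecialLinearGroup (Fin 2) ℝ :=
  ⟨!![1, 0; s, 1], by simp [Matrix.det_fin_two_of]⟩

/-- The upper unipotent `u_r = [[1,r],[0,1]]` as an element of SL(2,ℝ). -/
noncomputable def upU (r : ℝ) : Matrix.SpecialLinearGroup (Fin 2) ℝ :=
  ⟨!![1, r; 0, 1], by simp [Matrix.det_fin_two_of]⟩

/-- The diagonal `a_t = [[e^{t/2},0],[0,e^{-t/2}]]` as an element of SL(2,ℝ). -/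
noncomputable def diagA (w : ℝ) : Matrix.SpecialLinearGroup (Fin 2) ℝ :=
  ⟨!![Real.exp (w / 2), 0; 0, Real.exp (-(w / 2))], by
    simp [Matrix.det_fin_two_of, ← Real.exp_add]⟩

/-- The box `Q_G(δ,τ) = ū_{[-δ/τ,δ/τ]} ⬝ a_{[-δ,δ]} ⬝ u_{[-δ,δ]}` in SL(2,ℝ). -/
def QG (δ τ : ℝ) : Set (Matrix.SpecialLinearGroup (Fin 2) ℝ) :=
  {g | ∃ s w v : ℝ, |s| ≤ δ / τ ∧ |w| ≤ δ ∧ |v| ≤ δ ∧ g = lowU s * diagA w * upU v}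

/-!
Conjugation by `a_t` fixes `a_w` and rescales the unipotents, `ū_s ↦ ū_{s e^t}` and
`u_v ↦ u_{v e^{-t}}`; for `t ≥ 0` and `|s| ≤ δ e^{-t}` this moves `q ∈ Q_G(δ, e^t)` into
`Q_G(δ, 1)`. For `p = ū_c a_w u_v` with `|c|, |w|, |v| ≤ δ` and `|r| ≤ 2`, the entries of
`u_r⁻¹ p u_r` are computed explicitly: with `e^{±w/2} = 1 ± w/2 + O(w²)`, the diagonal
entries are within `13δ/5` of `1` and the off-diagonal ones are at most `37δ/5`. On `SL(2)`
the inverse is the adjugate `[[d, -b], [-c, a]]`, so such an entrywise bound passes to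
inverses, which covers `Q_G(δ, e^t)⁻¹`, and bounds every row sum of `g - 1` by `10δ`.
-/

open Matrix Real

local notation "SL₂" => Matrix.SpecialLinearGroup (Fin 2) ℝ

@[simp] lemma coe_upU (r : ℝ) : ((upU r : SL₂) : Matrix (Fin 2) (Fin 2) ℝ) = !![1, r; 0, 1] :=
  rfl

@[simp] lemma coe_lowU (s : ℝ) : ((lowU s : SL₂) : Matrix (Fin 2) (Fin 2) ℝ) = !![1, 0; s, 1] :=
  rfl

@[simp] lemma coe_diagA (w : ℝ) :
    ((diagA w : SL₂) : Matrix (Fin 2) (Fin 2) ℝ) = !![exp (w / 2), 0; 0, exp (-(w / 2))] :=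
  rfl

lemma upU_add (a b : ℝ) : upU (a + b) = upU a * upU b := by
  ext i j; fin_cases i <;> fin_cases j <;> simp [add_comm]

lemma diagA_add (a b : ℝ) : diagA (a + b) = diagA a * diagA b := by
  ext i j; fin_cases i <;> fin_cases j <;> simp [← exp_add] <;> ring_nf

lemma upU_neg (r : ℝ) : upU (-r) = (upU r)⁻¹ :=
  eq_inv_of_mul_eq_one_left <| by
    rw [← upU_add, neg_add_cancel]; ext i j; fin_cases i <;> fin_cases j <;> simp

lemma diagA_neg (t : ℝ) : diagA (-t) = (diagA t)⁻¹ :=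
  eq_inv_of_mul_eq_one_left <| by
    rw [← diagA_add, neg_add_cancel]; ext i j; fin_cases i <;> fin_cases j <;> simp

lemma diagA_commute (a b : ℝ) : Commute (diagA a) (diagA b) := by
  rw [Commute, SemiconjBy, ← diagA_add, ← diagA_add, add_comm]

lemma exp_half_mul_exp_half (t : ℝ) : exp (t / 2) * exp (t / 2) = exp t := by
  rw [← exp_add, add_halves]

lemma diagA_conj_lowU (t s : ℝ) : (diagA t)⁻¹ * lowU s * diagA t = lowU (s * exp t) := by
  rw [← diagA_neg, ← exp_half_mul_exp_half]
  ext i j; fin_cases i <;> fin_cases j <;> simp [neg_div, exp_neg]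
  field_simp

lemma diagA_conj_upU (t v : ℝ) : (diagA t)⁻¹ * upU v * diagA t = upU (v * exp (-t)) := by
  rw [← diagA_neg, exp_neg, ← exp_half_mul_exp_half]
  ext i j; fin_cases i <;> fin_cases j <;> simp [neg_div, exp_neg]
  field_simp

lemma diagA_conj_lowU_diagA_upU (t s w v : ℝ) :
    (diagA t)⁻¹ * (lowU s * diagA w * upU v) * diagA t =
      lowU (s * exp t) * diagA w * upU (v * exp (-t)) := by
  rw [← diagA_conj_lowU, ← diagA_conj_upU]
  simp only [mul_assoc, (diagA_commute t w).left_comm, mul_inv_cancel_left]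

lemma coe_upU_conj_lowU_diagA_upU (r c w v : ℝ) :
    (((upU r)⁻¹ * (lowU c * diagA w * upU v) * upU r : SL₂) : Matrix (Fin 2) (Fin 2) ℝ) =
      !![exp (w / 2) - r * c * exp (w / 2),
        r * (exp (w / 2) - c * exp (w / 2) * v - exp (-(w / 2))) - r ^ 2 * c * exp (w / 2)
          + exp (w / 2) * v;
        c * exp (w / 2), c * exp (w / 2) * v + exp (-(w / 2)) + r * c * exp (w / 2)] := by
  rw [← upU_neg]
  ext i j; fin_cases i <;> fin_cases j <;> simp <;> ring

def EntriesNearOne (α β : ℝ) (g : Matrix (Fin 2) (Fin 2) ℝ) : Prop :=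
  |g 0 0 - 1| ≤ α ∧ |g 1 1 - 1| ≤ α ∧ |g 0 1| ≤ β ∧ |g 1 0| ≤ β

namespace EntriesNearOne

variable {α β : ℝ}

lemma rowSumNorm_sub_one_le {g : Matrix (Fin 2) (Fin 2) ℝ} (h : EntriesNearOne α β g) :
    rowSumNorm (g - 1) ≤ α + β := by
  obtain ⟨h00, h11, h01, h10⟩ := h
  simp only [rowSumNorm, Matrix.sub_apply, one_apply_eq, one_apply_ne zero_ne_one,
    one_apply_ne one_ne_zero, sub_zero]
  exact max_le (by linarith) (by linarith)

lemma inv {g : SL₂} (h : EntriesNearOne α β g) :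
    EntriesNearOne α β ((g⁻¹ : SL₂) : Matrix (Fin 2) (Fin 2) ℝ) := by
  rw [Matrix.SpecialLinearGroup.coe_inv, adjugate_fin_two]
  obtain ⟨h00, h11, h01, h10⟩ := h
  simp only [EntriesNearOne, of_apply, cons_val', cons_val_zero, cons_val_one, empty_val',
    cons_val_fin_one, abs_neg]
  exact ⟨h11, h00, h01, h10⟩

end EntriesNearOne

lemma abs_exp_sub_one_le_abs_add_sq {x : ℝ} (hx : |x| ≤ 1) : |exp x - 1| ≤ |x| + x ^ 2 :=
  calc |exp x - 1| = |(exp x - 1 - x) + x| := by ring_nf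
    _ ≤ x ^ 2 + |x| := (abs_add_le _ _).trans (by gcongr; exact abs_exp_sub_one_sub_id_le hx)
    _ = |x| + x ^ 2 := add_comm _ _

lemma abs_exp_sub_exp_neg_le {x : ℝ} (hx : |x| ≤ 1) :
    |exp x - exp (-x)| ≤ 2 * |x| + 2 * x ^ 2 := by
  have hneg := abs_exp_sub_one_sub_id_le (x := -x) (by rwa [abs_neg])
  have hpos := abs_exp_sub_one_sub_id_le hx
  calc |exp x - exp (-x)| = |(exp x - 1 - x) - (exp (-x) - 1 - -x) + 2 * x| := by ring_nf
    _ ≤ |exp x - 1 - x| + |exp (-x) - 1 - -x| + |2 * x| :=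
        (abs_add_le _ _).trans (by gcongr; exact abs_sub _ _)
    _ ≤ x ^ 2 + x ^ 2 + 2 * |x| := by rw [abs_mul, abs_two, neg_sq] at *; gcongr
    _ = 2 * |x| + 2 * x ^ 2 := by ring

lemma entriesNearOne_upU_conj_lowU_diagA_upU {δ r c w v : ℝ} (hδ : δ ≤ 1 / 100)
    (hr : |r| ≤ 2) (hc : |c| ≤ δ) (hw : |w| ≤ δ) (hv : |v| ≤ δ) :
    EntriesNearOne (13 / 5 * δ) (37 / 5 * δ)
      ((upU r)⁻¹ * (lowU c * diagA w * upU v) * upU r : SL₂) := by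
  have hδ0 : 0 ≤ δ := (abs_nonneg c).trans hc
  have hw2 : |w / 2| ≤ δ / 2 := by rw [abs_div, abs_two]; linarith
  have hw2sq : (w / 2) ^ 2 ≤ δ / 400 := by
    rw [← sq_abs]; nlinarith [abs_nonneg (w / 2)]
  have hw1 : |w / 2| ≤ 1 := by linarith
  set A := exp (w / 2)
  set B := exp (-(w / 2))
  have hA : |A - 1| ≤ 51 / 100 * δ := by linarith [abs_exp_sub_one_le_abs_add_sq hw1]
  have hB : |B - 1| ≤ 51 / 100 * δ := by
    have := abs_exp_sub_one_le_abs_add_sq (x := -(w / 2)) (by rwa [abs_neg])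
    rw [abs_neg, neg_sq] at this
    linarith
  have hAB : |A - B| ≤ 101 / 100 * δ := by linarith [abs_exp_sub_exp_neg_le hw1]
  have hAabs : |A| ≤ 101 / 100 := by
    have := abs_add_le (A - 1) 1
    rw [sub_add_cancel, abs_one] at this
    linarith
  rw [coe_upU_conj_lowU_diagA_upU]
  refine ⟨?_, ?_, ?_, ?_⟩ <;> simp only [of_apply, cons_val', cons_val_zero, cons_val_one,
    empty_val', cons_val_fin_one]
  · calc |A - r * c * A - 1| ≤ |A - 1| + |r| * |c| * |A| := by
          rw [sub_right_comm, ← abs_mul, ← abs_mul]; exact abs_sub _ _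
      _ ≤ 51 / 100 * δ + 2 * δ * (101 / 100) := by gcongr
      _ ≤ 13 / 5 * δ := by linarith
  · calc |c * A * v + B + r * c * A - 1| = |c * A * v + (B - 1) + r * c * A| := by ring_nf
      _ ≤ |c| * |A| * |v| + |B - 1| + |r| * |c| * |A| := by
          simpa only [abs_mul] using abs_add_three (c * A * v) (B - 1) (r * c * A)
      _ ≤ δ * (101 / 100) * δ + 51 / 100 * δ + 2 * δ * (101 / 100) := by gcongr
      _ ≤ 13 / 5 * δ := by nlinarith
  · calc |r * (A - c * A * v - B) - r ^ 2 * c * A + A * v|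
          = |r * (A - B) - r * c * A * v - r ^ 2 * c * A + A * v| := by ring_nf
      _ ≤ |r * (A - B)| + |r * c * A * v| + |r ^ 2 * c * A| + |A * v| :=
          (abs_add_le _ _).trans (by gcongr; exact (abs_sub _ _).trans (by gcongr; exact abs_sub _ _))
      _ = |r| * |A - B| + |r| * |c| * |A| * |v| + |r| ^ 2 * |c| * |A| + |A| * |v| := by
          simp only [abs_mul, abs_pow]
      _ ≤ 2 * (101 / 100 * δ) + 2 * δ * (101 / 100) * δ + 2 ^ 2 * δ * (101 / 100)
          + 101 / 100 * δ := by gcongr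
      _ ≤ 37 / 5 * δ := by nlinarith
  · calc |c * A| = |c| * |A| := abs_mul _ _
      _ ≤ δ * (101 / 100) := by gcongr
      _ ≤ 37 / 5 * δ := by linarith

/-- For `q ∈ Q_G(δ, e^t) ∪ Q_G(δ, e^t)⁻¹`, one has
`‖(a_t u_r)⁻¹ q (a_t u_r) − I‖ ≤ 10δ`, i.e. `q ⬝ a_t u_r ∈ a_t u_r ⬝ B_G(10δ)`. -/
theorem QG_conj_small (δ t r : ℝ) (hδ : δ ∈ Set.Ioo (0 : ℝ) (1 / 100)) (ht : 0 ≤ t)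
    (hr : r ∈ Set.Icc (0 : ℝ) 2)
    (q : Matrix.SpecialLinearGroup (Fin 2) ℝ)
    (hq : q ∈ QG δ (Real.exp t) ∪ (QG δ (Real.exp t))⁻¹) :
    rowSumNorm ((((diagA t * upU r)⁻¹ * q * (diagA t * upU r) :
      Matrix.SpecialLinearGroup (Fin 2) ℝ) : Matrix (Fin 2) (Fin 2) ℝ) - 1) ≤ 10 * δ := by
  set g := diagA t * upU r
  have hbox : ∀ p ∈ QG δ (exp t),
      EntriesNearOne (13 / 5 * δ) (37 / 5 * δ) (g⁻¹ * p * g : SL₂) := by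
    rintro _ ⟨s, w, v, hs, hw, hv, rfl⟩
    have hconj : g⁻¹ * (lowU s * diagA w * upU v) * g =
        (upU r)⁻¹ * (lowU (s * exp t) * diagA w * upU (v * exp (-t))) * upU r := by
      rw [← diagA_conj_lowU_diagA_upU]; simp only [g]; group
    rw [hconj]
    refine entriesNearOne_upU_conj_lowU_diagA_upU hδ.2.le
      (abs_le.2 ⟨by linarith [hr.1], hr.2⟩) ?_ hw ?_
    · rw [abs_mul, abs_exp, ← le_div_iff₀ (exp_pos t)]; exact hs
    · rw [abs_mul, abs_exp]
      exact (mul_le_of_le_one_right (abs_nonneg v) (exp_le_one_iff.2 (neg_nonpos.2 ht))).trans hv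
  have htotal : 13 / 5 * δ + 37 / 5 * δ = 10 * δ := by ring
  rcases hq with hq | hq
  · exact htotal ▸ (hbox q hq).rowSumNorm_sub_one_le
  · have hinv : g⁻¹ * q * g = (g⁻¹ * q⁻¹ * g)⁻¹ := by group
    rw [hinv]
    exact htotal ▸ (hbox _ hq).inv.rowSumNorm_sub_one_le
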